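/- With q(θ) = exp(2Kr cos θ)/(2π I₀(2Kr)), the weighted H_{−1} norm of q' satisfies ‖q'‖²_{−1,1/q} = 1 − (2π)²/∫_S (1/q) = 1 − 1/I₀(2Kr)². Consequently D_K := 1/‖q'‖_{−1,1/q} = (1 − I₀(2Kr)^{−2})^{−1/2}. -/

import Mathlib

open Real MeasureTheory

/-- Modified Bessel function of the first kind of order `j` (integral formula). -/
noncomputable def besselI (j : ℕ) (x : ℝ) : ℝ :=
  (1 / (2 * π)) * ∫ θ in (0:ℝ)..(2 * π), (Real.cos θ) ^ j * Real.exp (x * Real.cos θ)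

/-- The stationary density `q(θ) = exp(2Kr cos θ)/(2π I₀(2Kr))`. -/
noncomputable def q (K r θ : ℝ) : ℝ :=
  Real.exp (2 * K * r * Real.cos θ) / (2 * π * besselI 0 (2 * K * r))

/-!
For any density `p > 0` on `[a, b]` with `∫ p = 1` and `J = ∫ 1/p`, the constant
`c = (b - a)/J` makes `p - c` the primitive centred for the weight `1/p`, and expanding the
square gives `∫ (p - c)²/p = ∫ p - 2c(b - a) + c² J = 1 - (b - a)²/J`.
For `q` one has `1/q θ = 2π I₀(2Kr) exp(-2Kr cos θ)`, and `θ ↦ θ + π` shows that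
`I₀` is even, so `∫ 1/q = (2π I₀(2Kr))²`.
-/

section CenteredPrimitive

variable {p : ℝ → ℝ} {a b : ℝ}

theorem integral_sub_div_self_eq_zero (hp : ∀ x ∈ Set.uIcc a b, p x ≠ 0)
    (hpinv : IntervalIntegrable (fun x => 1 / p x) volume a b)
    (hJ : ∫ x in a..b, 1 / p x ≠ 0) :
    ∫ x in a..b, (p x - (b - a) / ∫ y in a..b, 1 / p y) / p x = 0 := by
  set J := ∫ y in a..b, 1 / p y
  have hpoint : Set.EqOn (fun x => (p x - (b - a) / J) / p x)
      (fun x => 1 - (b - a) / J * (1 / p x)) (Set.uIcc a b) := by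
    intro x hx
    field_simp [hp x hx]
  rw [intervalIntegral.integral_congr hpoint,
    intervalIntegral.integral_sub intervalIntegrable_const (hpinv.const_mul _),
    intervalIntegral.integral_const_mul, intervalIntegral.integral_const, smul_eq_mul, mul_one]
  field_simp
  ring

theorem integral_sq_sub_div_self (hp : ∀ x ∈ Set.uIcc a b, p x ≠ 0)
    (hpint : IntervalIntegrable p volume a b)
    (hpinv : IntervalIntegrable (fun x => 1 / p x) volume a b)
    (hJ : ∫ x in a..b, 1 / p x ≠ 0) (hmass : ∫ x in a..b, p x = 1) :
    ∫ x in a..b, (p x - (b - a) / ∫ y in a..b, 1 / p y) ^ 2 / p x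
      = 1 - (b - a) ^ 2 / ∫ x in a..b, 1 / p x := by
  set J := ∫ y in a..b, 1 / p y
  have hpoint : Set.EqOn (fun x => (p x - (b - a) / J) ^ 2 / p x)
      (fun x => (p x - 2 * ((b - a) / J)) + ((b - a) / J) ^ 2 * (1 / p x)) (Set.uIcc a b) := by
    intro x hx
    field_simp [hp x hx]
    ring
  rw [intervalIntegral.integral_congr hpoint,
    intervalIntegral.integral_add (hpint.sub intervalIntegrable_const) (hpinv.const_mul _),
    intervalIntegral.integral_sub hpint intervalIntegrable_const,
    intervalIntegral.integral_const_mul (((b - a) / J) ^ 2), intervalIntegral.integral_const,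
    smul_eq_mul, hmass]
  field_simp
  ring

end CenteredPrimitive

theorem integral_exp_mul_cos (a : ℝ) :
    ∫ θ in (0:ℝ)..(2 * π), Real.exp (a * Real.cos θ) = 2 * π * besselI 0 a := by
  simp only [besselI, pow_zero, one_mul]
  field_simp

theorem besselI_neg (j : ℕ) (a : ℝ) : besselI j (-a) = (-1) ^ j * besselI j a := by
  set f := fun θ => Real.cos θ ^ j * Real.exp (a * Real.cos θ)
  have hf : Function.Periodic f (2 * π) := fun θ => by simp [f, Real.cos_add_two_pi]
  have hshift : ∀ θ, Real.cos θ ^ j * Real.exp (-a * Real.cos θ) = (-1) ^ j * f (θ + π) := by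
    intro θ
    simp only [f, Real.cos_add_pi, neg_pow (Real.cos θ), ← mul_assoc, ← mul_pow]
    norm_num
  have hint : ∫ θ in (0:ℝ)..(2 * π), f (θ + π) = ∫ θ in (0:ℝ)..(2 * π), f θ := by
    rw [intervalIntegral.integral_comp_add_right, zero_add, add_comm,
      hf.intervalIntegral_add_eq π 0, zero_add]
  simp only [besselI, hshift, intervalIntegral.integral_const_mul, hint]
  ring

theorem besselI_zero_pos (a : ℝ) : 0 < besselI 0 a := by
  have hint : 0 < ∫ θ in (0:ℝ)..(2 * π), Real.exp (a * Real.cos θ) :=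
    intervalIntegral.intervalIntegral_pos_of_pos
      ((by fun_prop : Continuous _).intervalIntegrable _ _) (fun _ => Real.exp_pos _)
      (by positivity)
  rw [integral_exp_mul_cos] at hint
  exact pos_of_mul_pos_right hint (by positivity)

section StationaryDensity

variable (K r : ℝ)

theorem q_pos (θ : ℝ) : 0 < q K r θ :=
  div_pos (Real.exp_pos _) (mul_pos (by positivity) (besselI_zero_pos _))

theorem differentiable_q : Differentiable ℝ (q K r) := by
  unfold q
  fun_prop

theorem one_div_q (θ : ℝ) :
    1 / q K r θ = 2 * π * besselI 0 (2 * K * r) * Real.exp (-(2 * K * r) * Real.cos θ) := by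
  rw [q, neg_mul, Real.exp_neg]
  field_simp

theorem integral_q : ∫ θ in (0:ℝ)..(2 * π), q K r θ = 1 := by
  have hA := (besselI_zero_pos (2 * K * r)).ne'
  simp only [q, intervalIntegral.integral_div, integral_exp_mul_cos]
  field_simp

theorem integral_one_div_q :
    ∫ θ in (0:ℝ)..(2 * π), 1 / q K r θ = (2 * π * besselI 0 (2 * K * r)) ^ 2 := by
  simp only [one_div_q, intervalIntegral.integral_const_mul, integral_exp_mul_cos, besselI_neg]
  ring

theorem intervalIntegrable_one_div_q (a b : ℝ) :
    IntervalIntegrable (fun θ => 1 / q K r θ) volume a b := by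
  simp only [one_div_q]
  exact Continuous.intervalIntegrable (by fun_prop) a b

end StationaryDensity

theorem norm_q_deriv_and_DK_general (K r : ℝ) :
    let c : ℝ := 1 / (2 * π * (besselI 0 (2 * K * r)) ^ 2)
    (c = 2 * π / ∫ θ in (0:ℝ)..(2 * π), 1 / q K r θ) ∧
    (∫ θ in (0:ℝ)..(2 * π), (q K r θ - c) / q K r θ) = 0 ∧
    (∀ θ, HasDerivAt (fun θ' => q K r θ' - c) (deriv (q K r) θ) θ) ∧
    (∫ θ in (0:ℝ)..(2 * π), (q K r θ - c) ^ 2 / q K r θ)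
      = 1 - (2 * π) ^ 2 / ∫ θ in (0:ℝ)..(2 * π), 1 / q K r θ ∧
    (∫ θ in (0:ℝ)..(2 * π), (q K r θ - c) ^ 2 / q K r θ)
      = 1 - 1 / (besselI 0 (2 * K * r)) ^ 2 ∧
    1 / Real.sqrt (∫ θ in (0:ℝ)..(2 * π), (q K r θ - c) ^ 2 / q K r θ)
      = 1 / Real.sqrt (1 - 1 / (besselI 0 (2 * K * r)) ^ 2) := by
  intro c
  have hA := (besselI_zero_pos (2 * K * r)).ne'
  have hJ := integral_one_div_q K r
  have hJ0 : ∫ θ in (0:ℝ)..(2 * π), 1 / q K r θ ≠ 0 := by rw [hJ]; positivity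
  have hp : ∀ θ ∈ Set.uIcc 0 (2 * π), q K r θ ≠ 0 := fun θ _ => (q_pos K r θ).ne'
  have hc : c = 2 * π / ∫ θ in (0:ℝ)..(2 * π), 1 / q K r θ := by
    rw [hJ, show c = 1 / (2 * π * besselI 0 (2 * K * r) ^ 2) from rfl]
    field_simp
  have hcentered := integral_sub_div_self_eq_zero hp (intervalIntegrable_one_div_q K r _ _) hJ0
  have hnorm := integral_sq_sub_div_self hp
    ((differentiable_q K r).continuous.intervalIntegrable _ _)
    (intervalIntegrable_one_div_q K r _ _) hJ0 (integral_q K r)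
  rw [sub_zero, ← hc] at hcentered hnorm
  have hbessel : 1 - (2 * π) ^ 2 / ∫ θ in (0:ℝ)..(2 * π), 1 / q K r θ
      = 1 - 1 / besselI 0 (2 * K * r) ^ 2 := by
    rw [hJ]
    field_simp
  exact ⟨hc, hcentered, fun θ => (differentiable_q K r θ).hasDerivAt.sub_const c, hnorm,
    hnorm.trans hbessel, by rw [hnorm, hbessel]⟩

/-- The weighted `H_{−1,1/q}` norm of `q'`: the centered primitive of `q'` is
`q − c` with `c = 2π/∫(1/q) = 1/(2π I₀(2Kr)²)`, and
`‖q'‖²_{−1,1/q} = ∫ (q − c)²/q = 1 − (2π)²/∫(1/q) = 1 − I₀(2Kr)^{−2}`.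
Consequently `D_K = 1/‖q'‖_{−1,1/q} = (1 − I₀(2Kr)^{−2})^{−1/2}`. -/
theorem norm_q_deriv_and_DK (K r : ℝ) (hK : 1 < K) (hr : 0 < r)
    (hfix : r = besselI 1 (2 * K * r) / besselI 0 (2 * K * r)) :
    let c : ℝ := 1 / (2 * π * (besselI 0 (2 * K * r)) ^ 2)
    (c = 2 * π / ∫ θ in (0:ℝ)..(2 * π), 1 / q K r θ) ∧
    (∫ θ in (0:ℝ)..(2 * π), (q K r θ - c) / q K r θ) = 0 ∧
    (∀ θ, HasDerivAt (fun θ' => q K r θ' - c) (deriv (q K r) θ) θ) ∧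
    (∫ θ in (0:ℝ)..(2 * π), (q K r θ - c) ^ 2 / q K r θ)
      = 1 - (2 * π) ^ 2 / ∫ θ in (0:ℝ)..(2 * π), 1 / q K r θ ∧
    (∫ θ in (0:ℝ)..(2 * π), (q K r θ - c) ^ 2 / q K r θ)
      = 1 - 1 / (besselI 0 (2 * K * r)) ^ 2 ∧
    1 / Real.sqrt (∫ θ in (0:ℝ)..(2 * π), (q K r θ - c) ^ 2 / q K r θ)
      = 1 / Real.sqrt (1 - 1 / (besselI 0 (2 * K * r)) ^ 2) :=
  norm_q_deriv_and_DK_general K r
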